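/- Let (Φ, ≤, D; ⊗, d, ↓, e) be an ordered valuation algebra, and let φ ∈ Φ_x, ψ ∈ Φ_y with x ≤ y. Then: (1) if φ ⊗ e_y ≤ ψ then φ ≤ ψ↓x; (2) if moreover e_z ≤ χ for every z ∈ D and every χ ∈ Φ_z, and Φ is regular (for every ψ and every x ≤ d(ψ) there exists χ ∈ Φ_x such that ψ↓x ⊗ χ ⊗ ψ ≤ ψ), then φ ≤ ψ↓x implies φ ⊗ e_y ≤ ψ. -/

import Mathlib

/-- A (stable) ordered valuation algebra `(Φ, ≤, D; ⊗, d, ↓, e)`: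
a partially ordered set `Φ` of valuations, a bounded lattice `D` of domains,
a combination `comb`, a domain map `dom`, a focusing operation `focus`
(a total extension of the partial operation `φ↓x`, defined for `x ≤ dom φ`),
and identity elements `e x`. -/
structure OVA (Φ : Type*) (D : Type*) [PartialOrder Φ] [Lattice D] [BoundedOrder D] where
  comb : Φ → Φ → Φ
  dom : Φ → D
  focus : Φ → D → Φ
  e : D → Φ
  comb_comm : ∀ φ ψ, comb φ ψ = comb ψ φ
  comb_assoc : ∀ φ ψ χ, comb (comb φ ψ) χ = comb φ (comb ψ χ)
  dom_eq_of_le : ∀ {φ ψ}, φ ≤ ψ → dom φ = dom ψ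
  dom_e : ∀ x, dom (e x) = x
  e_comb_e : ∀ x y, comb (e x) (e y) = e (x ⊔ y)
  comb_e : ∀ (φ : Φ) (x : D), dom φ = x → comb φ (e x) = φ
  focus_e : ∀ {x y : D}, x ≤ y → focus (e y) x = e x
  dom_comb : ∀ φ ψ, dom (comb φ ψ) = dom φ ⊔ dom ψ
  dom_focus : ∀ {φ : Φ} {x : D}, x ≤ dom φ → dom (focus φ x) = x
  focus_focus : ∀ {φ : Φ} {x y : D}, x ≤ y → y ≤ dom φ →
    focus (focus φ y) x = focus φ x
  focus_comb : ∀ φ ψ, focus (comb φ ψ) (dom φ) = comb φ (focus ψ (dom φ ⊓ dom ψ))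
  comb_mono : ∀ {φ₁ ψ₁ φ₂ ψ₂ : Φ}, φ₁ ≤ ψ₁ → φ₂ ≤ ψ₂ → comb φ₁ φ₂ ≤ comb ψ₁ ψ₂
  focus_mono : ∀ {φ ψ : Φ} {x : D}, φ ≤ ψ → x ≤ dom φ → focus φ x ≤ focus ψ x

namespace OVA

variable {Φ D : Type*} [PartialOrder Φ] [Lattice D] [BoundedOrder D] (V : OVA Φ D)

def IsRegular : Prop :=
  ∀ (ψ : Φ) (x : D), x ≤ V.dom ψ →
    ∃ χ : Φ, V.dom χ = x ∧ V.comb (V.comb (V.focus ψ x) χ) ψ ≤ ψ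

variable {V}

theorem dom_comb_e_of_le {φ : Φ} {y : D} (hy : V.dom φ ≤ y) :
    V.dom (V.comb φ (V.e y)) = y := by
  rw [V.dom_comb, V.dom_e, sup_eq_right.mpr hy]

theorem focus_comb_e_of_le {φ : Φ} {y : D} (hy : V.dom φ ≤ y) :
    V.focus (V.comb φ (V.e y)) (V.dom φ) = φ := by
  rw [V.focus_comb, V.dom_e, inf_eq_left.mpr hy, V.focus_e hy, V.comb_e φ _ rfl]

theorem le_focus_of_comb_e_le {φ ψ : Φ} {y : D} (hy : V.dom φ ≤ y)
    (h : V.comb φ (V.e y) ≤ ψ) : φ ≤ V.focus ψ (V.dom φ) := by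
  have hdom : V.dom φ ≤ V.dom (V.comb φ (V.e y)) := (dom_comb_e_of_le hy).symm ▸ hy
  simpa only [focus_comb_e_of_le hy] using V.focus_mono h hdom

theorem comb_e_le_of_le_focus (he : ∀ (z : D) (χ : Φ), V.dom χ = z → V.e z ≤ χ)
    (hreg : V.IsRegular) {φ ψ : Φ} {x : D} (hx : x ≤ V.dom ψ)
    (h : φ ≤ V.focus ψ x) : V.comb φ (V.e (V.dom ψ)) ≤ ψ := by
  obtain ⟨χ, hχ, hχψ⟩ := hreg ψ x hx
  have he_le : V.e (V.dom ψ) ≤ V.comb χ ψ :=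
    he _ _ (by rw [V.dom_comb, hχ, sup_eq_right.mpr hx])
  calc V.comb φ (V.e (V.dom ψ)) ≤ V.comb (V.focus ψ x) (V.comb χ ψ) := V.comb_mono h he_le
    _ = V.comb (V.comb (V.focus ψ x) χ) ψ := (V.comb_assoc _ _ _).symm
    _ ≤ ψ := hχψ

end OVA

/-- in an ordered valuation algebra, vacuous extension is a lower
adjoint of focusing: `φ ⊗ e_y ≤ ψ` implies `φ ≤ ψ↓x`; and conversely provided
each `e_z` is a least element of its fibre and the algebra is regular. -/
theorem OVA_galois_connection {Φ D : Type*} [PartialOrder Φ] [Lattice D] [BoundedOrder D]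
    (V : OVA Φ D) (x y : D) (φ ψ : Φ)
    (hφ : V.dom φ = x) (hψ : V.dom ψ = y) (hxy : x ≤ y) :
    -- (1)
    (V.comb φ (V.e y) ≤ ψ → φ ≤ V.focus ψ x) ∧
    -- (2)
    ((∀ (z : D) (χ : Φ), V.dom χ = z → V.e z ≤ χ) →
     (∀ (ψ' : Φ) (x' : D), x' ≤ V.dom ψ' →
       ∃ χ : Φ, V.dom χ = x' ∧ V.comb (V.comb (V.focus ψ' x') χ) ψ' ≤ ψ') →
     φ ≤ V.focus ψ x → V.comb φ (V.e y) ≤ ψ) := by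
  subst hφ hψ
  exact ⟨OVA.le_focus_of_comb_e_le hxy,
    fun he hreg => OVA.comb_e_le_of_le_focus he hreg hxy⟩
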